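/- Contact preservation of the first-order two-split scheme for 1D Euler: if the initial data has constant velocity u₀ and constant pressure p₀ (with arbitrary positive density profile), then under the CFL condition Δt ≤ νΔx/|u₀|, the scheme given by the implicit wave-equation prediction and the explicit correction preserves u^n = u₀ and p^n = p₀ at all times, while the density is advected by the first-order upwind scheme ρᵢ^{n+1} = ρᵢ^n − (Δt/Δx)u₀(ρᵢ^n − ρ_{i−1}^n). -/

import Mathlib

noncomputable section

/-- Toro–Vázquez-Cendón convective sub-flux `f^slow(q) = (ρu, ρu², ρE_kin u)`
in conserved variables `q = (ρ, ρu, ρE)`. -/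
def fslow (q : Fin 3 → ℝ) : Fin 3 → ℝ :=
  ![q 1, (q 1) ^ 2 / q 0, (q 1) ^ 3 / (2 * (q 0) ^ 2)]

/-- Toro–Vázquez-Cendón pressure sub-flux `f^fast(q) = (0, p, (ρe+p)u)`
with ideal gas law `p = (γ-1)(ρE - (ρu)²/(2ρ))`. -/
def ffast (γ : ℝ) (q : Fin 3 → ℝ) : Fin 3 → ℝ :=
  ![0, (γ - 1) * (q 2 - (q 1) ^ 2 / (2 * q 0)),
    ((q 2 - (q 1) ^ 2 / (2 * q 0)) + (γ - 1) * (q 2 - (q 1) ^ 2 / (2 * q 0)))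
      * (q 1 / q 0)]

/-- Rusanov flux for the convective sub-system, with speed `max(|u_L|, |u_R|)`. -/
def rusanovFlux (qL qR : Fin 3 → ℝ) : Fin 3 → ℝ :=
  fun k => (fslow qL k + fslow qR k) / 2
    - max |qL 1 / qL 0| |qR 1 / qR 0| / 2 * (qR k - qL k)

/-- Centred flux for the implicitly treated pressure sub-system. -/
def centralFlux (γ : ℝ) (qL qR : Fin 3 → ℝ) : Fin 3 → ℝ :=
  fun k => (ffast γ qL k + ffast γ qR k) / 2

/-- discrete maximum principle: homogeneous solutions of `(I - cΔ) r = 0` vanish. -/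
lemma homog_zero {N : ℕ} [NeZero N] (c : ℝ) (hc : 0 ≤ c) (r : Fin N → ℝ)
    (h : ∀ i, r i - c * (r (i + 1) - 2 * r i + r (i - 1)) = 0) : ∀ i, r i = 0 := by
  haveI : Nonempty (Fin N) := ⟨⟨0, Nat.pos_of_ne_zero (NeZero.ne N)⟩⟩
  obtain ⟨iM, hM⟩ := Finite.exists_max r
  obtain ⟨im, hm⟩ := Finite.exists_min r
  have hM0 : r iM ≤ 0 := by
    have h1 := h iM
    have h2 := hM (iM + 1)
    have h3 := hM (iM - 1)
    nlinarith [mul_nonneg hc (sub_nonneg.mpr h2), mul_nonneg hc (sub_nonneg.mpr h3)]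
  have hm0 : 0 ≤ r im := by
    have h1 := h im
    have h2 := hm (iM + 1)
    have h3 := hm (im + 1)
    have h4 := hm (im - 1)
    nlinarith [mul_nonneg hc (sub_nonneg.mpr h3), mul_nonneg hc (sub_nonneg.mpr h4)]
  intro i
  have := hM i
  have := hm i
  linarith

/-- discrete minimum principle: positivity. -/
lemma pos_of_pos_rhs {N : ℕ} [NeZero N] (c : ℝ) (hc : 0 ≤ c) (x b : Fin N → ℝ)
    (h : ∀ i, x i - c * (x (i + 1) - 2 * x i + x (i - 1)) = b i)
    (hb : ∀ i, 0 < b i) : ∀ i, 0 < x i := by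
  haveI : Nonempty (Fin N) := ⟨⟨0, Nat.pos_of_ne_zero (NeZero.ne N)⟩⟩
  obtain ⟨im, hm⟩ := Finite.exists_min x
  have hm0 : 0 < x im := by
    have h1 := h im
    have h2 := hm (im + 1)
    have h3 := hm (im - 1)
    have hb1 := hb im
    nlinarith [mul_nonneg hc (sub_nonneg.mpr h2), mul_nonneg hc (sub_nonneg.mpr h3)]
  intro i
  exact lt_of_lt_of_le hm0 (hm i)

lemma rus_eval (γ u₀ p₀ : ℝ) (hu : 0 < u₀) (qL qR : Fin 3 → ℝ)
    (hL0 : 0 < qL 0) (hR0 : 0 < qR 0)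
    (hL1 : qL 1 = u₀ * qL 0) (hR1 : qR 1 = u₀ * qR 0)
    (hL2 : qL 2 = p₀ / (γ - 1) + qL 0 * u₀ ^ 2 / 2)
    (hR2 : qR 2 = p₀ / (γ - 1) + qR 0 * u₀ ^ 2 / 2) :
    ∀ k, rusanovFlux qL qR k = ![u₀ * qL 0, u₀ ^ 2 * qL 0, u₀ ^ 3 * qL 0 / 2] k := by
  have hL0' : qL 0 ≠ 0 := ne_of_gt hL0
  have hR0' : qR 0 ≠ 0 := ne_of_gt hR0
  have hL : qL 1 / qL 0 = u₀ := by rw [hL1]; field_simp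
  have hR : qR 1 / qR 0 = u₀ := by rw [hR1]; field_simp
  have habs : max |qL 1 / qL 0| |qR 1 / qR 0| = u₀ := by
    rw [hL, hR, abs_of_pos hu, max_self]
  intro k
  fin_cases k <;>
    simp [rusanovFlux, fslow, habs, abs_of_pos hu, hL1, hR1, hL2, hR2] <;>
    field_simp [abs_of_pos hu] <;> simp only [max_self, abs_of_pos hu] <;> ring

lemma ffast_eval (γ u₀ p₀ : ℝ) (hγ : 1 < γ) (q : Fin 3 → ℝ) (h0 : q 0 ≠ 0)
    (h1 : q 1 = u₀ * q 0) (h2 : q 2 = p₀ / (γ - 1) + q 0 * u₀ ^ 2 / 2) :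
    ∀ k, ffast γ q k = ![0, p₀, (p₀ / (γ - 1) + p₀) * u₀] k := by
  have hγ' : γ - 1 ≠ 0 := ne_of_gt (by linarith)
  intro k
  fin_cases k <;> simp [ffast, h1, h2] <;> field_simp <;> ring


/-- Contact preservation of the first-order two-split scheme for 1D Euler:
initial data with constant velocity `u₀ > 0` and constant pressure `p₀`
(and positive density) keeps `uⁿ = u₀`, `pⁿ = p₀` (i.e. `ρu = u₀ ρ` and
`ρE = p₀/(γ-1) + ρ u₀²/2`) for all times under the material CFL condition,
while the density is advected by first-order upwinding. -/
theorem contact_preservation {N : ℕ} [NeZero N] (hN : 3 ≤ N)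
    (γ Δt Δx u₀ p₀ ν : ℝ) (hγ : 1 < γ) (hΔt : 0 < Δt) (hΔx : 0 < Δx)
    (hu₀ : 0 < u₀) (hp₀ : 0 < p₀) (hν0 : 0 < ν) (hν1 : ν ≤ 1)
    (hcfl : Δt ≤ ν * Δx / u₀)
    (a : ℕ → ℝ)
    (q qp : ℕ → Fin N → Fin 3 → ℝ)
    -- prediction step: decoupled implicit wave-type equation
    (hpred : ∀ n i k, qp n i k - Δt ^ 2 / Δx ^ 2 * (a n) ^ 2 *
        (qp n (i + 1) k - 2 * qp n i k + qp n (i - 1) k)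
      = q n i k
        - Δt / Δx * (rusanovFlux (q n i) (q n (i + 1)) k
            - rusanovFlux (q n (i - 1)) (q n i) k)
        - Δt / Δx * (centralFlux γ (q n i) (q n (i + 1)) k
            - centralFlux γ (q n (i - 1)) (q n i) k))
    -- correction step: explicit update with implicit fluxes at predicted states
    (hcorr : ∀ n i k, q (n + 1) i k
      = q n i k
        - Δt / Δx * (rusanovFlux (q n i) (q n (i + 1)) k
            - rusanovFlux (q n (i - 1)) (q n i) k)
        - Δt / Δx * (centralFlux γ (qp n i) (qp n (i + 1)) k
            - centralFlux γ (qp n (i - 1)) (qp n i) k))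
    -- initial data: positive density, constant velocity u₀, constant pressure p₀
    (hinit : ∀ i, 0 < q 0 i 0 ∧ q 0 i 1 = u₀ * q 0 i 0 ∧
        q 0 i 2 = p₀ / (γ - 1) + q 0 i 0 * u₀ ^ 2 / 2) :
    ∀ n i, 0 < q n i 0 ∧ q n i 1 = u₀ * q n i 0 ∧
      q n i 2 = p₀ / (γ - 1) + q n i 0 * u₀ ^ 2 / 2 ∧
      q (n + 1) i 0 = q n i 0 - Δt / Δx * u₀ * (q n i 0 - q n (i - 1) 0) := by
  have hγ' : (γ : ℝ) - 1 ≠ 0 := ne_of_gt (by linarith)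
  -- CFL-derived bounds on t := Δt/Δx * u₀
  have ht0 : 0 ≤ Δt / Δx * u₀ := by positivity
  have ht1 : Δt / Δx * u₀ ≤ 1 := by
    have h1 : Δt * u₀ ≤ ν * Δx := (le_div_iff₀ hu₀).mp hcfl
    rw [div_mul_eq_mul_div, div_le_iff₀ hΔx]
    nlinarith
  have hc : 0 ≤ Δt ^ 2 / Δx ^ 2 * (a : ℕ → ℝ) 0 ^ 2 := by positivity
  -- convex combination positivity
  have hconv : ∀ x y : ℝ, 0 < x → 0 < y →
      0 < x - Δt / Δx * (u₀ * x - u₀ * y) := by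
    intro x y hx hy
    have hmx : min x y ≤ x := min_le_left x y
    have hmy : min x y ≤ y := min_le_right x y
    have hm : 0 < min x y := lt_min hx hy
    nlinarith [mul_le_mul_of_nonneg_left hmx (by linarith : (0:ℝ) ≤ 1 - Δt / Δx * u₀),
      mul_le_mul_of_nonneg_left hmy ht0]
  have key : ∀ n, (∀ i, 0 < q n i 0 ∧ q n i 1 = u₀ * q n i 0 ∧
        q n i 2 = p₀ / (γ - 1) + q n i 0 * u₀ ^ 2 / 2) →
      (∀ i, 0 < q (n + 1) i 0 ∧ q (n + 1) i 1 = u₀ * q (n + 1) i 0 ∧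
        q (n + 1) i 2 = p₀ / (γ - 1) + q (n + 1) i 0 * u₀ ^ 2 / 2) ∧
      (∀ i, q (n + 1) i 0 = q n i 0 - Δt / Δx * u₀ * (q n i 0 - q n (i - 1) 0)) := by
    intro n hP
    have hρ : ∀ i, 0 < q n i 0 := fun i => (hP i).1
    have h1 : ∀ i, q n i 1 = u₀ * q n i 0 := fun i => (hP i).2.1
    have h2 : ∀ i, q n i 2 = p₀ / (γ - 1) + q n i 0 * u₀ ^ 2 / 2 :=
      fun i => (hP i).2.2
    have hru : ∀ (i j : Fin N) k, rusanovFlux (q n i) (q n j) k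
        = ![u₀ * q n i 0, u₀ ^ 2 * q n i 0, u₀ ^ 3 * q n i 0 / 2] k :=
      fun i j => rus_eval γ u₀ p₀ hu₀ (q n i) (q n j) (hρ i) (hρ j)
        (h1 i) (h1 j) (h2 i) (h2 j)
    have hff : ∀ (i : Fin N) k, ffast γ (q n i) k
        = ![0, p₀, (p₀ / (γ - 1) + p₀) * u₀] k :=
      fun i => ffast_eval γ u₀ p₀ hγ (q n i) (ne_of_gt (hρ i)) (h1 i) (h2 i)
    have hcen : ∀ (i j : Fin N) k, centralFlux γ (q n i) (q n j) k
        = ![0, p₀, (p₀ / (γ - 1) + p₀) * u₀] k := by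
      intro i j k
      simp only [centralFlux, hff i k, hff j k]
      ring
    set c : ℝ := Δt ^ 2 / Δx ^ 2 * (a n) ^ 2 with hcdef
    have hcpos : 0 ≤ c := by positivity
    -- prediction equations with evaluated fluxes
    have e0 : ∀ i, qp n i 0 - c * (qp n (i + 1) 0 - 2 * qp n i 0 + qp n (i - 1) 0)
        = q n i 0 - Δt / Δx * (u₀ * q n i 0 - u₀ * q n (i - 1) 0) := by
      intro i
      have h := hpred n i 0
      rw [hru i (i + 1) 0, hru (i - 1) i 0, hcen i (i + 1) 0, hcen (i - 1) i 0] at h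
      simpa using h
    have e1 : ∀ i, qp n i 1 - c * (qp n (i + 1) 1 - 2 * qp n i 1 + qp n (i - 1) 1)
        = q n i 1 - Δt / Δx * (u₀ ^ 2 * q n i 0 - u₀ ^ 2 * q n (i - 1) 0) := by
      intro i
      have h := hpred n i 1
      rw [hru i (i + 1) 1, hru (i - 1) i 1, hcen i (i + 1) 1, hcen (i - 1) i 1] at h
      simpa using h
    have e2 : ∀ i, qp n i 2 - c * (qp n (i + 1) 2 - 2 * qp n i 2 + qp n (i - 1) 2)
        = q n i 2 - Δt / Δx * (u₀ ^ 3 * q n i 0 / 2 - u₀ ^ 3 * q n (i - 1) 0 / 2) := by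
      intro i
      have h := hpred n i 2
      rw [hru i (i + 1) 2, hru (i - 1) i 2, hcen i (i + 1) 2, hcen (i - 1) i 2] at h
      simpa using h
    -- qp has positive density and the same invariants
    have hqp0 : ∀ i, 0 < qp n i 0 :=
      pos_of_pos_rhs c hcpos (fun i => qp n i 0)
        (fun i => q n i 0 - Δt / Δx * (u₀ * q n i 0 - u₀ * q n (i - 1) 0))
        e0 (fun i => hconv _ _ (hρ i) (hρ (i - 1)))
    have hqp1 : ∀ i, qp n i 1 = u₀ * qp n i 0 := by
      have hz := homog_zero c hcpos (fun i => qp n i 1 - u₀ * qp n i 0) ?_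
      · intro i; have := hz i; linarith
      · intro i
        have ha := e1 i
        have hb := e0 i
        have hci := h1 i
        linear_combination ha - u₀ * hb + hci
    have hqp2 : ∀ i, qp n i 2 = p₀ / (γ - 1) + qp n i 0 * u₀ ^ 2 / 2 := by
      have hz := homog_zero c hcpos
        (fun i => qp n i 2 - p₀ / (γ - 1) - u₀ ^ 2 / 2 * qp n i 0) ?_
      · intro i; have := hz i; linarith
      · intro i
        have ha := e2 i
        have hb := e0 i
        have hci := h2 i
        linear_combination ha - u₀ ^ 2 / 2 * hb + hci
    have hcenp : ∀ (i j : Fin N) k, centralFlux γ (qp n i) (qp n j) k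
        = ![0, p₀, (p₀ / (γ - 1) + p₀) * u₀] k := by
      intro i j k
      have hfi := ffast_eval γ u₀ p₀ hγ (qp n i) (ne_of_gt (hqp0 i)) (hqp1 i) (hqp2 i) k
      have hfj := ffast_eval γ u₀ p₀ hγ (qp n j) (ne_of_gt (hqp0 j)) (hqp1 j) (hqp2 j) k
      simp only [centralFlux, hfi, hfj]
      ring
    -- correction equations with evaluated fluxes
    have f0 : ∀ i, q (n + 1) i 0
        = q n i 0 - Δt / Δx * (u₀ * q n i 0 - u₀ * q n (i - 1) 0) := by
      intro i
      have h := hcorr n i 0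
      rw [hru i (i + 1) 0, hru (i - 1) i 0, hcenp i (i + 1) 0, hcenp (i - 1) i 0] at h
      simpa using h
    have f1 : ∀ i, q (n + 1) i 1
        = q n i 1 - Δt / Δx * (u₀ ^ 2 * q n i 0 - u₀ ^ 2 * q n (i - 1) 0) := by
      intro i
      have h := hcorr n i 1
      rw [hru i (i + 1) 1, hru (i - 1) i 1, hcenp i (i + 1) 1, hcenp (i - 1) i 1] at h
      simpa using h
    have f2 : ∀ i, q (n + 1) i 2
        = q n i 2 - Δt / Δx * (u₀ ^ 3 * q n i 0 / 2 - u₀ ^ 3 * q n (i - 1) 0 / 2) := by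
      intro i
      have h := hcorr n i 2
      rw [hru i (i + 1) 2, hru (i - 1) i 2, hcenp i (i + 1) 2, hcenp (i - 1) i 2] at h
      simpa using h
    refine ⟨fun i => ⟨?_, ?_, ?_⟩, fun i => ?_⟩
    · rw [f0 i]; exact hconv _ _ (hρ i) (hρ (i - 1))
    · rw [f1 i, f0 i, h1 i]; ring
    · rw [f2 i, f0 i, h2 i]; ring
    · rw [f0 i]; ring
  have main : ∀ n i, 0 < q n i 0 ∧ q n i 1 = u₀ * q n i 0 ∧
      q n i 2 = p₀ / (γ - 1) + q n i 0 * u₀ ^ 2 / 2 := by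
    intro n
    induction n with
    | zero => exact hinit
    | succ m ih => exact (key m ih).1
  intro n i
  exact ⟨(main n i).1, (main n i).2.1, (main n i).2.2, (key n (main n)).2 i⟩

end
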